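/- arXiv:2511.03037 — 2 statements merged into one kernel-verified Lean document; each statement's English description precedes it below -/
import Mathlib

section
/- For every a > 0 and λ > 0, the Laplace transform of the Lévy first-hitting density is ∫₀^∞ e^{−λ t} · (a / √(2π t³)) · exp(−a²/(2t)) dt = exp(−a √(2λ)). -/
open Set MeasureTheory

section aux

variable {d : ℝ}

/-- The map `u ↦ u - d/u` sends `(0,∞)` onto `ℝ` when `d > 0`. -/
lemma psi_image (hd : 0 < d) : (fun u : ℝ => u - d / u) '' Ioi 0 = univ := by
  ext y
  simp only [mem_image, mem_univ, iff_true]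
  refine ⟨(y + Real.sqrt (y ^ 2 + 4 * d)) / 2, ?_, ?_⟩
  · have h1 : |y| < Real.sqrt (y ^ 2 + 4 * d) := by
      rw [← Real.sqrt_sq_eq_abs]
      exact Real.sqrt_lt_sqrt (sq_nonneg y) (by linarith)
    have h2 : -y ≤ |y| := neg_le_abs y
    simp only [mem_Ioi]
    linarith
  · have hs : Real.sqrt (y ^ 2 + 4 * d) ^ 2 = y ^ 2 + 4 * d :=
      Real.sq_sqrt (by nlinarith [sq_nonneg y])
    have hu : (0:ℝ) < (y + Real.sqrt (y ^ 2 + 4 * d)) / 2 := by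
      have h1 : |y| < Real.sqrt (y ^ 2 + 4 * d) := by
        rw [← Real.sqrt_sq_eq_abs]
        exact Real.sqrt_lt_sqrt (sq_nonneg y) (by linarith)
      have h2 : -y ≤ |y| := neg_le_abs y
      linarith
    have hu0 : (y + Real.sqrt (y ^ 2 + 4 * d)) / 2 ≠ 0 := ne_of_gt hu
    have hdiv : d / ((y + Real.sqrt (y ^ 2 + 4 * d)) / 2)
        = (y + Real.sqrt (y ^ 2 + 4 * d)) / 2 - y := by
      rw [div_eq_iff hu0]
      nlinarith [hs]
    show (y + Real.sqrt (y ^ 2 + 4 * d)) / 2 - d / ((y + Real.sqrt (y ^ 2 + 4 * d)) / 2) = y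
    rw [hdiv]
    ring

lemma psi_injOn (hd : 0 < d) : InjOn (fun u : ℝ => u - d / u) (Ioi 0) := by
  apply StrictMonoOn.injOn
  intro u hu v hv huv
  simp only [mem_Ioi] at hu hv
  have : d / v < d / u := div_lt_div_of_pos_left hd hu huv
  simp only
  linarith

lemma psi_hasDeriv (hd : 0 < d) :
    ∀ u ∈ Ioi (0:ℝ), HasDerivWithinAt (fun u : ℝ => u - d / u) (1 + d / u ^ 2) (Ioi 0) u := by
  intro u hu
  have hu0 : u ≠ 0 := ne_of_gt hu
  have h : HasDerivAt (fun u : ℝ => u - d / u) (1 - (0 * u - d * 1) / u ^ 2) u :=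
    (hasDerivAt_id u).sub ((hasDerivAt_const u d).div (hasDerivAt_id u) hu0)
  have := h.hasDerivWithinAt (s := Ioi 0)
  refine this.congr_deriv ?_
  ring

/-- The map `u ↦ d/u` sends `(0,∞)` onto `(0,∞)` when `d > 0`. -/
lemma inv_image (hd : 0 < d) : (fun u : ℝ => d / u) '' Ioi 0 = Ioi 0 := by
  ext y
  simp only [mem_image, mem_Ioi]
  constructor
  · rintro ⟨u, hu, rfl⟩; positivity
  · intro hy
    exact ⟨d / y, by positivity, by field_simp⟩

lemma inv_injOn (hd : 0 < d) : InjOn (fun u : ℝ => d / u) (Ioi 0) := by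
  intro u hu v hv h
  simp only [mem_Ioi] at hu hv
  simp only at h
  field_simp at h
  exact h.symm

lemma inv_hasDeriv (hd : 0 < d) :
    ∀ u ∈ Ioi (0:ℝ), HasDerivWithinAt (fun u : ℝ => d / u) (-(d / u ^ 2)) (Ioi 0) u := by
  intro u hu
  have hu0 : u ≠ 0 := ne_of_gt hu
  have h : HasDerivAt (fun u : ℝ => d / u) ((0 * u - d * 1) / u ^ 2) u :=
    (hasDerivAt_const u d).div (hasDerivAt_id u) hu0
  have := h.hasDerivWithinAt (s := Ioi 0)
  refine this.congr_deriv ?_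
  ring

/-- The map `u ↦ c/u^2` sends `(0,∞)` onto `(0,∞)` when `c > 0`. -/
lemma sq_inv_image {c : ℝ} (hc : 0 < c) : (fun u : ℝ => c / u ^ 2) '' Ioi 0 = Ioi 0 := by
  ext y
  simp only [mem_image, mem_Ioi]
  constructor
  · rintro ⟨u, hu, rfl⟩; positivity
  · intro hy
    refine ⟨Real.sqrt (c / y), by positivity, ?_⟩
    rw [Real.sq_sqrt (by positivity)]
    field_simp

lemma sq_inv_injOn {c : ℝ} (hc : 0 < c) : InjOn (fun u : ℝ => c / u ^ 2) (Ioi 0) := by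
  intro u hu v hv h
  simp only [mem_Ioi] at hu hv
  simp only at h
  field_simp at h
  nlinarith

lemma sq_inv_hasDeriv {c : ℝ} (hc : 0 < c) :
    ∀ u ∈ Ioi (0:ℝ), HasDerivWithinAt (fun u : ℝ => c / u ^ 2) (-(2 * c / u ^ 3)) (Ioi 0) u := by
  intro u hu
  have hu0 : u ≠ 0 := ne_of_gt hu
  have h : HasDerivAt (fun u : ℝ => c / u ^ 2)
      ((0 * u ^ 2 - c * (2 * u ^ 1)) / (u ^ 2) ^ 2) u :=
    (hasDerivAt_const u c).div (hasDerivAt_pow 2 u) (by positivity)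
  have := h.hasDerivWithinAt (s := Ioi 0)
  refine this.congr_deriv ?_
  field_simp
  ring

/-- The Gaussian integral in the form we need. -/
lemma gauss_half : ∫ y : ℝ, Real.exp (-(y ^ 2) / 2) = Real.sqrt (2 * Real.pi) := by
  have h := integral_gaussian (1/2 : ℝ)
  have h2 : ∀ y : ℝ, Real.exp (-(1/2 : ℝ) * y ^ 2) = Real.exp (-(y ^ 2) / 2) := by
    intro y; ring_nf
  simp_rw [h2] at h
  rw [h]
  norm_num
  rw [mul_comm]

lemma gauss_half_int : MeasureTheory.Integrable (fun y : ℝ => Real.exp (-(y ^ 2) / 2)) := by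
  have h := integrable_exp_neg_mul_sq (b := (1/2 : ℝ)) (by norm_num)
  have h2 : (fun y : ℝ => Real.exp (-(y ^ 2) / 2))
      = fun y : ℝ => Real.exp (-(1/2 : ℝ) * y ^ 2) := by
    funext y; ring_nf
  rw [h2]
  exact h

/-- Glasser-type reduction: `∫₀^∞ (1 + d/u²) e^{-(u - d/u)²/2} du = √(2π)`. -/
lemma glasser_sum (hd : 0 < d) :
    ∫ u in Ioi (0:ℝ), (1 + d / u ^ 2) * Real.exp (-((u - d / u) ^ 2) / 2)
      = Real.sqrt (2 * Real.pi) := by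
  have key := integral_image_eq_integral_abs_deriv_smul measurableSet_Ioi
    (psi_hasDeriv hd) (psi_injOn hd) (fun y => Real.exp (-(y ^ 2) / 2))
  rw [psi_image hd, Measure.restrict_univ, gauss_half] at key
  rw [key]
  apply MeasureTheory.setIntegral_congr_fun measurableSet_Ioi
  intro u hu
  simp only [mem_Ioi] at hu
  have : |1 + d / u ^ 2| = 1 + d / u ^ 2 := abs_of_pos (by positivity)
  simp [this, smul_eq_mul]

lemma glasser_sum_int (hd : 0 < d) :
    IntegrableOn (fun u => (1 + d / u ^ 2) * Real.exp (-((u - d / u) ^ 2) / 2)) (Ioi (0:ℝ)) := by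
  have key := (integrableOn_image_iff_integrableOn_abs_deriv_smul measurableSet_Ioi
    (psi_hasDeriv hd) (psi_injOn hd) (fun y => Real.exp (-(y ^ 2) / 2))).mp
    (by rw [psi_image hd]; exact gauss_half_int.integrableOn)
  apply key.congr_fun _ measurableSet_Ioi
  intro u hu
  simp only [mem_Ioi] at hu
  have : |1 + d / u ^ 2| = 1 + d / u ^ 2 := abs_of_pos (by positivity)
  simp [this, smul_eq_mul]

end aux

/-- Laplace transform of the Lévy first-hitting density:
`∫₀^∞ e^{−λt} a/√(2πt³) e^{−a²/(2t)} dt = e^{−a√(2λ)}`. -/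
theorem levy_hitting_density_laplace (a lam : ℝ) (ha : 0 < a) (hlam : 0 < lam) :
    (∫ t in Set.Ioi (0:ℝ),
        Real.exp (-lam * t) * (a / Real.sqrt (2 * Real.pi * t ^ 3)) *
          Real.exp (-(a ^ 2) / (2 * t))) =
      Real.exp (-a * Real.sqrt (2 * lam)) := by
  have hπ : (0:ℝ) < Real.pi := Real.pi_pos
  have hs2π : (0:ℝ) < Real.sqrt (2 * Real.pi) := Real.sqrt_pos.mpr (by positivity)
  set d : ℝ := a * Real.sqrt (2 * lam) with hd_def
  have hd : 0 < d := by
    have : (0:ℝ) < Real.sqrt (2 * lam) := Real.sqrt_pos.mpr (by positivity)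
    positivity
  have hd2 : d ^ 2 = 2 * lam * a ^ 2 := by
    rw [hd_def, mul_pow, Real.sq_sqrt (by positivity)]
    ring
  set g : ℝ → ℝ := fun t =>
    Real.exp (-lam * t) * (a / Real.sqrt (2 * Real.pi * t ^ 3)) *
      Real.exp (-(a ^ 2) / (2 * t)) with hg_def
  -- Step A: substitute t = a²/u²
  have stepA : (∫ t in Ioi (0:ℝ), g t)
      = ∫ u in Ioi (0:ℝ),
          (2 / Real.sqrt (2 * Real.pi)) * Real.exp (-d) *
            Real.exp (-((u - d / u) ^ 2) / 2) := by
    have key := integral_image_eq_integral_abs_deriv_smul measurableSet_Ioi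
      (sq_inv_hasDeriv (c := a ^ 2) (by positivity)) (sq_inv_injOn (by positivity)) g
    rw [sq_inv_image (by positivity)] at key
    rw [key]
    apply MeasureTheory.setIntegral_congr_fun measurableSet_Ioi
    intro u hu
    simp only [mem_Ioi] at hu
    have hu0 : u ≠ 0 := ne_of_gt hu
    have habs : |(-(2 * a ^ 2 / u ^ 3))| = 2 * a ^ 2 / u ^ 3 := by
      rw [abs_neg, abs_of_pos (by positivity)]
    have hsq : Real.sqrt (2 * Real.pi * (a ^ 2 / u ^ 2) ^ 3)
        = Real.sqrt (2 * Real.pi) * a ^ 3 / u ^ 3 := by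
      rw [show 2 * Real.pi * (a ^ 2 / u ^ 2) ^ 3 = (2 * Real.pi) * (a ^ 3 / u ^ 3) ^ 2 by
        field_simp]
      rw [Real.sqrt_mul (by positivity), Real.sqrt_sq (by positivity)]
      ring
    have hexp1 : -lam * (a ^ 2 / u ^ 2) = -(d ^ 2 / 2) / u ^ 2 := by
      rw [hd2]; field_simp
    have hexp2 : -(a ^ 2) / (2 * (a ^ 2 / u ^ 2)) = -(u ^ 2) / 2 := by
      field_simp
    have hcomb : -(d ^ 2 / 2) / u ^ 2 + (-(u ^ 2) / 2)
        = -d + (-((u - d / u) ^ 2) / 2) := by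
      field_simp
      ring
    simp only [hg_def, smul_eq_mul, habs]
    rw [hexp1, hexp2, hsq]
    rw [show Real.exp (-(d ^ 2 / 2) / u ^ 2) * (a / (Real.sqrt (2 * Real.pi) * a ^ 3 / u ^ 3)) *
          Real.exp (-(u ^ 2) / 2)
        = (Real.exp (-(d ^ 2 / 2) / u ^ 2) * Real.exp (-(u ^ 2) / 2)) *
            (a / (Real.sqrt (2 * Real.pi) * a ^ 3 / u ^ 3)) by ring,
      ← Real.exp_add, hcomb, Real.exp_add]
    field_simp
  -- Step B: the two halves of the Glasser trick
  set J : ℝ := ∫ u in Ioi (0:ℝ), Real.exp (-((u - d / u) ^ 2) / 2) with hJ_def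
  set K : ℝ := ∫ u in Ioi (0:ℝ), (d / u ^ 2) * Real.exp (-((u - d / u) ^ 2) / 2) with hK_def
  have hJK : J = K := by
    have key := integral_image_eq_integral_abs_deriv_smul measurableSet_Ioi
      (inv_hasDeriv hd) (inv_injOn hd) (fun y => Real.exp (-((y - d / y) ^ 2) / 2))
    rw [inv_image hd] at key
    rw [hJ_def, hK_def, key]
    apply MeasureTheory.setIntegral_congr_fun measurableSet_Ioi
    intro u hu
    simp only [mem_Ioi] at hu
    have hu0 : u ≠ 0 := ne_of_gt hu
    have habs : |(-(d / u ^ 2))| = d / u ^ 2 := by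
      rw [abs_neg, abs_of_pos (by positivity)]
    simp only [smul_eq_mul, habs]
    rw [show d / u - d / (d / u) = -(u - d / u) by field_simp; ring,
      neg_sq]
  -- integrability of the two halves
  have hmeas1 : MeasureTheory.AEStronglyMeasurable
      (fun u : ℝ => Real.exp (-((u - d / u) ^ 2) / 2)) (volume.restrict (Ioi 0)) := by
    apply ContinuousOn.aestronglyMeasurable _ measurableSet_Ioi
    apply ContinuousOn.rexp
    apply ContinuousOn.div_const
    apply ContinuousOn.neg
    apply ContinuousOn.pow
    exact (continuousOn_id.sub (continuousOn_const.div continuousOn_id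
      (fun x hx => ne_of_gt hx)))
  have hmeas2 : MeasureTheory.AEStronglyMeasurable
      (fun u : ℝ => (d / u ^ 2) * Real.exp (-((u - d / u) ^ 2) / 2))
      (volume.restrict (Ioi 0)) := by
    apply ContinuousOn.aestronglyMeasurable _ measurableSet_Ioi
    apply ContinuousOn.mul
    · exact continuousOn_const.div (continuousOn_pow 2) (fun x hx => by
        simp only [mem_Ioi] at hx; positivity)
    · apply ContinuousOn.rexp
      apply ContinuousOn.div_const
      apply ContinuousOn.neg
      apply ContinuousOn.pow
      exact (continuousOn_id.sub (continuousOn_const.div continuousOn_id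
        (fun x hx => ne_of_gt hx)))
  have hint1 : IntegrableOn (fun u : ℝ => Real.exp (-((u - d / u) ^ 2) / 2)) (Ioi 0) := by
    apply Integrable.mono (glasser_sum_int hd) hmeas1
    filter_upwards [ae_restrict_mem measurableSet_Ioi] with u hu
    simp only [mem_Ioi] at hu
    rw [Real.norm_eq_abs, Real.norm_eq_abs, abs_of_pos (Real.exp_pos _),
      abs_of_pos (by positivity)]
    nlinarith [Real.exp_pos (-((u - d / u) ^ 2) / 2), div_pos hd (pow_pos hu 2)]
  have hint2 : IntegrableOn
      (fun u : ℝ => (d / u ^ 2) * Real.exp (-((u - d / u) ^ 2) / 2)) (Ioi 0) := by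
    apply Integrable.mono (glasser_sum_int hd) hmeas2
    filter_upwards [ae_restrict_mem measurableSet_Ioi] with u hu
    simp only [mem_Ioi] at hu
    rw [Real.norm_eq_abs, Real.norm_eq_abs, abs_of_pos (by positivity),
      abs_of_pos (by positivity)]
    nlinarith [Real.exp_pos (-((u - d / u) ^ 2) / 2), div_pos hd (pow_pos hu 2)]
  have hsum : J + K = Real.sqrt (2 * Real.pi) := by
    rw [hJ_def, hK_def, ← MeasureTheory.integral_add hint1 hint2, ← glasser_sum hd]
    apply MeasureTheory.setIntegral_congr_fun measurableSet_Ioi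
    intro u hu
    ring
  have hJval : J = Real.sqrt (2 * Real.pi) / 2 := by
    rw [hJK] at hsum ⊢
    linarith
  rw [stepA]
  rw [MeasureTheory.integral_const_mul, ← hJ_def, hJval]
  rw [show -a * Real.sqrt (2 * lam) = -d by rw [hd_def]; ring]
  rw [show 2 / Real.sqrt (2 * Real.pi) * Real.exp (-d) * (Real.sqrt (2 * Real.pi) / 2)
      = Real.exp (-d) * (Real.sqrt (2 * Real.pi) / Real.sqrt (2 * Real.pi)) by ring,
    div_self hs2π.ne', mul_one]
end

section
/- For every μ ∈ ℝ and every λ > 0, the Laplace transform identity ∫₀^∞ e^{−λ u} · [ √(2/(π u)) · e^{−μ² u/2} + μ·(2Φ(μ√u) − 1) ] du = √(2λ + μ²) / λ holds. -/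
open Real MeasureTheory Set Filter intervalIntegral

/-- The standard normal cumulative distribution function. -/
noncomputable def stdNormalCDF (x : ℝ) : ℝ :=
  (Real.sqrt (2 * Real.pi))⁻¹ * ∫ z in Set.Iio x, Real.exp (-z ^ 2 / 2)

lemma gauss_fun_eq : (fun z : ℝ => Real.exp (-z ^ 2 / 2)) = fun z => Real.exp (-(1/2:ℝ) * z ^ 2) := by
  funext z; congr 1; ring

lemma gauss_integrable : Integrable (fun z : ℝ => Real.exp (-z ^ 2 / 2)) := by
  rw [gauss_fun_eq]
  exact integrable_exp_neg_mul_sq (by norm_num : (0:ℝ) < 1/2)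

lemma gauss_total : (∫ z : ℝ, Real.exp (-z ^ 2 / 2)) = Real.sqrt (2 * Real.pi) := by
  rw [gauss_fun_eq, integral_gaussian, show Real.pi/(1/2:ℝ) = 2 * Real.pi by ring]

lemma stdNormalCDF_nonneg (x : ℝ) : 0 ≤ stdNormalCDF x := by
  apply mul_nonneg (inv_nonneg.mpr (Real.sqrt_nonneg _))
  exact setIntegral_nonneg measurableSet_Iio (fun z _ => (Real.exp_pos _).le)

lemma stdNormalCDF_le_one (x : ℝ) : stdNormalCDF x ≤ 1 := by
  have hs : 0 < Real.sqrt (2 * Real.pi) :=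
    Real.sqrt_pos.mpr (by positivity)
  rw [stdNormalCDF, inv_mul_le_iff₀ hs, mul_one]
  calc (∫ z in Set.Iio x, Real.exp (-z ^ 2 / 2))
      ≤ ∫ z : ℝ, Real.exp (-z ^ 2 / 2) :=
        setIntegral_le_integral gauss_integrable
          (Filter.Eventually.of_forall fun z => (Real.exp_pos _).le)
    _ = Real.sqrt (2 * Real.pi) := gauss_total

lemma abs_two_cdf_sub_one_le (x : ℝ) : |2 * stdNormalCDF x - 1| ≤ 1 := by
  rw [abs_le]
  constructor <;> nlinarith [stdNormalCDF_nonneg x, stdNormalCDF_le_one x]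

lemma stdNormalCDF_zero : stdNormalCDF 0 = 1/2 := by
  have hint := gauss_integrable
  have hIio : (∫ z in Set.Iio (0:ℝ), Real.exp (-z ^ 2 / 2))
      = ∫ z in Set.Ioi (0:ℝ), Real.exp (-z ^ 2 / 2) := by
    rw [setIntegral_congr_set Iio_ae_eq_Iic]
    rw [show Set.Ioi (0:ℝ) = Set.Ioi (-(0:ℝ)) by norm_num, ← integral_comp_neg_Iic]
    apply setIntegral_congr_fun measurableSet_Iic
    intro z _; simp [neg_sq]
  have hsplit : (∫ z in Set.Iic (0:ℝ), Real.exp (-z ^ 2 / 2))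
      + (∫ z in Set.Ioi (0:ℝ), Real.exp (-z ^ 2 / 2)) = Real.sqrt (2 * Real.pi) := by
    rw [integral_Iic_add_Ioi hint.integrableOn hint.integrableOn, gauss_total]
  rw [← setIntegral_congr_set Iio_ae_eq_Iic, ← hIio] at hsplit
  have hs : Real.sqrt (2 * Real.pi) ≠ 0 :=
    ne_of_gt (Real.sqrt_pos.mpr (by positivity))
  have hI : (∫ z in Set.Iio (0:ℝ), Real.exp (-z ^ 2 / 2)) = Real.sqrt (2 * Real.pi) / 2 := by
    linarith
  rw [stdNormalCDF, hI]
  field_simp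

lemma hasDerivAt_stdNormalCDF (x : ℝ) :
    HasDerivAt stdNormalCDF (Real.exp (-x ^ 2 / 2) / Real.sqrt (2 * Real.pi)) x := by
  have hint := gauss_integrable
  have key : ∀ y : ℝ, stdNormalCDF y =
      (Real.sqrt (2 * Real.pi))⁻¹ * (∫ z in Set.Iic (0:ℝ), Real.exp (-z ^ 2 / 2))
        + (Real.sqrt (2 * Real.pi))⁻¹ * ∫ z in (0:ℝ)..y, Real.exp (-z ^ 2 / 2) := by
    intro y
    rw [stdNormalCDF, setIntegral_congr_set Iio_ae_eq_Iic,
      ← integral_Iic_sub_Iic hint.integrableOn hint.integrableOn]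
    ring
  have hd : HasDerivAt (fun y : ℝ =>
      (Real.sqrt (2 * Real.pi))⁻¹ * (∫ z in Set.Iic (0:ℝ), Real.exp (-z ^ 2 / 2))
        + (Real.sqrt (2 * Real.pi))⁻¹ * ∫ z in (0:ℝ)..y, Real.exp (-z ^ 2 / 2))
      (Real.exp (-x ^ 2 / 2) / Real.sqrt (2 * Real.pi)) x := by
    have hcont : Continuous (fun z : ℝ => Real.exp (-z ^ 2 / 2)) := by continuity
    have h1 : HasDerivAt (fun y : ℝ => ∫ z in (0:ℝ)..y, Real.exp (-z ^ 2 / 2))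
        (Real.exp (-x ^ 2 / 2)) x :=
      intervalIntegral.integral_hasDerivAt_right hint.intervalIntegrable
        (hcont.stronglyMeasurableAtFilter _ _) hcont.continuousAt
    have := (h1.const_mul ((Real.sqrt (2 * Real.pi))⁻¹)).const_add
      ((Real.sqrt (2 * Real.pi))⁻¹ * (∫ z in Set.Iic (0:ℝ), Real.exp (-z ^ 2 / 2)))
    rw [div_eq_inv_mul]
    exact this
  exact hd.congr_of_eventuallyEq (Filter.Eventually.of_forall key)

lemma continuous_stdNormalCDF : Continuous stdNormalCDF :=
  continuous_iff_continuousAt.mpr fun x => (hasDerivAt_stdNormalCDF x).continuousAt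

lemma integrableOn_exp_div_sqrt {c : ℝ} (hc : 0 < c) :
    IntegrableOn (fun u : ℝ => Real.exp (-c * u) / Real.sqrt u) (Set.Ioi 0) := by
  rw [← integrableOn_Ioi_comp_rpow_iff _ (two_ne_zero (α := ℝ))]
  apply IntegrableOn.congr_fun
    (f := fun x : ℝ => 2 * Real.exp (-c * x ^ 2))
  · exact ((integrable_exp_neg_mul_sq hc).integrableOn).const_mul 2
  · intro x hx
    have hx0 : (0:ℝ) < x := hx
    have h2 : x ^ (2:ℝ) = x ^ 2 := by
      rw [← Real.rpow_natCast x 2]; norm_num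
    have hsq : Real.sqrt (x ^ 2) = x := by
      rw [Real.sqrt_sq hx0.le]
    simp only [smul_eq_mul, h2, hsq]
    rw [show (2:ℝ) - 1 = 1 by norm_num, Real.rpow_one]
    field_simp
    ring
  · exact measurableSet_Ioi

lemma integral_exp_div_sqrt {c : ℝ} (hc : 0 < c) :
    (∫ u in Set.Ioi (0:ℝ), Real.exp (-c * u) / Real.sqrt u) = Real.sqrt (Real.pi / c) := by
  have h := MeasureTheory.integral_comp_rpow_Ioi
    (fun y : ℝ => Real.exp (-c * y) / Real.sqrt y) (p := 2) (two_ne_zero (α := ℝ))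
  rw [← h]
  have hcong : ∀ x ∈ Set.Ioi (0:ℝ),
      (|(2:ℝ)| * x ^ ((2:ℝ) - 1)) • (Real.exp (-c * x ^ (2:ℝ)) / Real.sqrt (x ^ (2:ℝ)))
        = 2 * Real.exp (-c * x ^ 2) := by
    intro x hx
    have hx0 : (0:ℝ) < x := hx
    have h2 : x ^ (2:ℝ) = x ^ 2 := by
      rw [← Real.rpow_natCast x 2]; norm_num
    have hsq : Real.sqrt (x ^ 2) = x := Real.sqrt_sq hx0.le
    simp only [smul_eq_mul, h2, hsq]
    rw [show (2:ℝ) - 1 = 1 by norm_num, Real.rpow_one]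
    rw [abs_of_nonneg (by norm_num : (0:ℝ) ≤ 2)]
    field_simp
  rw [setIntegral_congr_fun measurableSet_Ioi hcong, MeasureTheory.integral_const_mul,
    integral_gaussian_Ioi]
  ring

/-- Laplace transform of `ξ(u) = √(2/(πu)) e^{−μ²u/2} + μ(2Φ(μ√u) − 1)`:
`∫₀^∞ e^{−λu} ξ(u) du = √(2λ + μ²)/λ`. -/
theorem xi_laplace_transform (μ lam : ℝ) (hlam : 0 < lam) :
    (∫ u in Set.Ioi (0:ℝ),
        Real.exp (-lam * u) *
          (Real.sqrt (2 / (Real.pi * u)) * Real.exp (-μ ^ 2 * u / 2) +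
            μ * (2 * stdNormalCDF (μ * Real.sqrt u) - 1))) =
      Real.sqrt (2 * lam + μ ^ 2) / lam := by
  have hπ : (0:ℝ) < Real.pi := Real.pi_pos
  have hs : (0:ℝ) < 2 * lam + μ ^ 2 := by positivity
  have hss : Real.sqrt (2 * lam + μ ^ 2) ≠ 0 := ne_of_gt (Real.sqrt_pos.mpr hs)
  have hc : (0:ℝ) < lam + μ ^ 2 / 2 := by positivity
  set c : ℝ := lam + μ ^ 2 / 2 with hc_def
  set F : ℝ → ℝ := fun u => Real.exp (-lam * u) * (2 * stdNormalCDF (μ * Real.sqrt u) - 1)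
    with hF_def
  have hsqrt2pi : Real.sqrt (2 * Real.pi) ≠ 0 := ne_of_gt (Real.sqrt_pos.mpr (by positivity))
  have hFcont : Continuous F :=
    (Real.continuous_exp.comp (continuous_const.mul continuous_id)).mul
      ((continuous_const.mul
        (continuous_stdNormalCDF.comp (continuous_const.mul Real.continuous_sqrt))).sub
        continuous_const)
  have hFbound : ∀ u : ℝ, ‖F u‖ ≤ Real.exp (-lam * u) := by
    intro u
    rw [hF_def]
    rw [Real.norm_eq_abs, abs_mul, Real.abs_exp]
    calc Real.exp (-lam * u) * |2 * stdNormalCDF (μ * Real.sqrt u) - 1|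
        ≤ Real.exp (-lam * u) * 1 :=
          mul_le_mul_of_nonneg_left (abs_two_cdf_sub_one_le _) (Real.exp_pos _).le
      _ = Real.exp (-lam * u) := mul_one _
  have hFint : IntegrableOn F (Set.Ioi 0) := by
    apply Integrable.mono' (exp_neg_integrableOn_Ioi 0 hlam)
      (hFcont.aestronglyMeasurable.restrict)
    exact Filter.Eventually.of_forall fun u => hFbound u
  have hexpmul : ∀ u : ℝ, Real.exp (-lam * u) * Real.exp (-(μ ^ 2 * u) / 2)
      = Real.exp (-c * u) := by
    intro u
    rw [← Real.exp_add]
    congr 1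
    rw [hc_def]; ring
  have hderiv : ∀ u ∈ Set.Ioi (0:ℝ), HasDerivAt F
      (-lam * F u + μ / Real.sqrt (2 * Real.pi) * (Real.exp (-c * u) / Real.sqrt u)) u := by
    intro u hu
    have hu0 : (0:ℝ) < u := hu
    have hsu : Real.sqrt u ≠ 0 := ne_of_gt (Real.sqrt_pos.mpr hu0)
    have h1 : HasDerivAt (fun u : ℝ => Real.exp (-lam * u)) (Real.exp (-lam * u) * (-lam)) u := by
      have := ((hasDerivAt_id u).const_mul (-lam)).exp
      simpa using this
    have h2 : HasDerivAt (fun u : ℝ => μ * Real.sqrt u) (μ * (1 / (2 * Real.sqrt u))) u :=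
      (Real.hasDerivAt_sqrt hu0.ne').const_mul μ
    have h3 := (hasDerivAt_stdNormalCDF (μ * Real.sqrt u)).comp u h2
    have h4 := (h3.const_mul 2).sub_const 1
    have h5 := h1.mul h4
    convert h5 using 1
    · rfl
    · rfl
    · rfl
    have hsq : -(μ * Real.sqrt u) ^ 2 / 2 = -(μ ^ 2 * u) / 2 := by
      rw [mul_pow, Real.sq_sqrt hu0.le]
    rw [hsq]
    rw [hF_def]
    simp only [Function.comp_apply]
    rw [← hexpmul u]
    field_simp
  have hgint := integrableOn_exp_div_sqrt hc
  have hF'int : IntegrableOn (fun u : ℝ =>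
      -lam * F u + μ / Real.sqrt (2 * Real.pi) * (Real.exp (-c * u) / Real.sqrt u))
      (Set.Ioi 0) :=
    (hFint.const_mul (-lam)).add (hgint.const_mul _)
  have htend : Filter.Tendsto F Filter.atTop (nhds 0) := by
    apply squeeze_zero_norm hFbound
    have h1 : Filter.Tendsto (fun u : ℝ => lam * u) Filter.atTop Filter.atTop :=
      Filter.Tendsto.const_mul_atTop hlam Filter.tendsto_id
    have h2 := Real.tendsto_exp_neg_atTop_nhds_zero.comp h1
    exact h2.congr fun u => by simp [Function.comp, neg_mul]
  have hF0 : F 0 = 0 := by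
    rw [hF_def]
    simp [stdNormalCDF_zero]
  have key := integral_Ioi_of_hasDerivAt_of_tendsto
    (hFcont.continuousWithinAt) hderiv hF'int htend
  rw [hF0, sub_zero] at key
  rw [MeasureTheory.integral_add (hFint.const_mul (-lam)) (hgint.const_mul _),
    MeasureTheory.integral_const_mul, MeasureTheory.integral_const_mul,
    integral_exp_div_sqrt hc] at key
  have hIF : (∫ u in Set.Ioi (0:ℝ), F u)
      = μ / Real.sqrt (2 * Real.pi) * Real.sqrt (Real.pi / c) / lam := by
    field_simp at key ⊢
    linarith [key]
  -- split the main integral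
  have hcongr : Set.EqOn
      (fun u : ℝ => Real.exp (-lam * u) *
          (Real.sqrt (2 / (Real.pi * u)) * Real.exp (-μ ^ 2 * u / 2) +
            μ * (2 * stdNormalCDF (μ * Real.sqrt u) - 1)))
      (fun u : ℝ => Real.sqrt (2 / Real.pi) * (Real.exp (-c * u) / Real.sqrt u) + μ * F u)
      (Set.Ioi 0) := by
    intro u hu
    have hu0 : (0:ℝ) < u := hu
    have hsu : Real.sqrt u ≠ 0 := ne_of_gt (Real.sqrt_pos.mpr hu0)
    simp only [hF_def]
    have hsq : Real.sqrt (2 / (Real.pi * u)) = Real.sqrt (2 / Real.pi) / Real.sqrt u := by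
      rw [show (2:ℝ) / (Real.pi * u) = 2 / Real.pi / u from (div_div _ _ _).symm,
        Real.sqrt_div (by positivity)]
    rw [hsq]
    have := hexpmul u
    rw [show -μ ^ 2 * u / 2 = -(μ ^ 2 * u) / 2 by ring, ← this]
    field_simp
  rw [setIntegral_congr_fun measurableSet_Ioi hcongr,
    MeasureTheory.integral_add (hgint.const_mul _) (hFint.const_mul μ),
    MeasureTheory.integral_const_mul, MeasureTheory.integral_const_mul,
    integral_exp_div_sqrt hc, hIF]
  -- final algebra
  have h2c : 2 * lam + μ ^ 2 = 2 * c := by rw [hc_def]; ring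
  have hkey : Real.sqrt (Real.pi / c) = Real.sqrt (2 * Real.pi) / Real.sqrt (2 * lam + μ ^ 2) := by
    rw [eq_div_iff hss, ← Real.sqrt_mul (by positivity : (0:ℝ) ≤ Real.pi / c)]
    congr 1
    rw [h2c]
    field_simp
  have h4 : Real.sqrt (2 / Real.pi) * Real.sqrt (2 * Real.pi) = 2 := by
    rw [← Real.sqrt_mul (by positivity : (0:ℝ) ≤ 2 / Real.pi)]
    rw [show 2 / Real.pi * (2 * Real.pi) = 4 by field_simp; ring]
    rw [show (4:ℝ) = 2 ^ 2 by norm_num, Real.sqrt_sq (by norm_num : (0:ℝ) ≤ 2)]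
  have hsqs : Real.sqrt (2 * lam + μ ^ 2) * Real.sqrt (2 * lam + μ ^ 2) = 2 * lam + μ ^ 2 :=
    Real.mul_self_sqrt hs.le
  have hterm2 : μ / Real.sqrt (2 * Real.pi) *
      (Real.sqrt (2 * Real.pi) / Real.sqrt (2 * lam + μ ^ 2))
      = μ / Real.sqrt (2 * lam + μ ^ 2) := by
    rw [div_mul_div_comm, mul_comm μ (Real.sqrt (2 * Real.pi)),
      mul_div_mul_left _ _ hsqrt2pi]
  rw [hkey, ← mul_div_assoc, h4, hterm2]
  field_simp
  linear_combination (-1 : ℝ) * hsqs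
end
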